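/- (Noise-free online Sinkhorn converges.) Let α, β be probability measures on X and suppose the continuous functions f*, g* satisfy f* = T_β g* and g* = T_α f*. Let (η_t)_{t≥0} satisfy 0 ≤ η_t ≤ 1 and Σ_t η_t = ∞. Starting from continuous (f_0, g_0), define for each t ≥ 0: exp(−f_{t+1}) = (1 − η_t) exp(−f_t) + η_t exp(−T_β g_t) and exp(−g_{t+1}) = (1 − η_t) exp(−g_t) + η_t exp(−T_α f_t). Then ‖f_t − f*‖_var + ‖g_t − g*‖_var → 0 as t → ∞. -/

import Mathlib

open MeasureTheory Filter

/-- Soft C-transform: `(T_μ h)(x) = − log ∫ exp(h(y) − C(x, y)) dμ(y)`. -/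
noncomputable def softT {X : Type*} [MeasurableSpace X]
    (C : X × X → ℝ) (μ : Measure X) (h : X → ℝ) : X → ℝ :=
  fun x => - Real.log (∫ y, Real.exp (h y - C (x, y)) ∂μ)

/-- Variation norm: `‖f‖_var = sup f − inf f`. -/
noncomputable def varNorm {X : Type*} (f : X → ℝ) : ℝ :=
  (⨆ x, f x) - ⨅ x, f x

/-!
Write `u_t = f_t - f*`, `v_t = g_t - g*`. Using `f* = T_β g*`, the update becomes
`exp (-u_{t+1}) = (1 - η_t) exp (-u_t) + η_t exp (-(T_β g_t - T_β g*))`, a convex combination, so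
the errors stay bounded by their initial sup norm `K` (`T_μ` is 1-Lipschitz for the sup norm).
Since `C` varies by at most `R` in its first variable, the Gibbs measures
`exp (h - C (x, ·)) μ` at two points `x, x'` have mutual densities at least `θ = exp (-2R)`, which
gives the Birkhoff-type contraction `exp ‖T h₁ - T h₂‖_var ≤ θ + (1 - θ) exp ‖h₁ - h₂‖_var`.
Feeding this into the update, `M_t = max (‖u_t‖_var, ‖v_t‖_var)` satisfies
`M_{t+1} ≤ M_t - η_t θ exp (-2K) (1 - exp (-M_t))`, and `Σ η_t = ∞` forces `M_t → 0`.
-/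

open Real Topology

section VarNorm

variable {X : Type*} {w : X → ℝ}

lemma varNorm_le_of_forall_sub_le [Nonempty X] {r : ℝ} (h : ∀ x x', w x - w x' ≤ r) :
    varNorm w ≤ r := by
  have hsup : (⨆ x, w x) ≤ (⨅ x, w x) + r :=
    ciSup_le fun x => by linarith [le_ciInf fun x' => (by linarith [h x x'] : w x - r ≤ w x')]
  rw [varNorm]
  linarith

lemma sub_le_varNorm (hb : BddAbove (Set.range w)) (hb' : BddBelow (Set.range w)) (x x' : X) :
    w x - w x' ≤ varNorm w := by
  rw [varNorm]
  linarith [le_ciSup hb x, ciInf_le hb' x']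

lemma varNorm_nonneg [Nonempty X] (hb : BddAbove (Set.range w)) (hb' : BddBelow (Set.range w)) :
    0 ≤ varNorm w := by
  have := sub_le_varNorm hb hb' (Classical.arbitrary X) (Classical.arbitrary X)
  linarith

end VarNorm

theorem tendsto_zero_of_succ_le_sub_mul {M η : ℕ → ℝ} {φ : ℝ → ℝ}
    (hM : ∀ t, 0 ≤ M t) (hη : ∀ t, 0 ≤ η t) (hdiv : ¬ Summable η)
    (hφ : StrictMono φ) (hφ0 : φ 0 = 0)
    (hstep : ∀ t, M (t + 1) ≤ M t - η t * φ (M t)) :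
    Tendsto M atTop (𝓝 0) := by
  have hanti : Antitone M := antitone_nat_of_succ_le fun t => by
    have : 0 ≤ φ (M t) := hφ0 ▸ hφ.monotone (hM t)
    nlinarith [hstep t, hη t]
  have hbdd : BddBelow (Set.range M) := ⟨0, by rintro _ ⟨t, rfl⟩; exact hM t⟩
  have hlim := tendsto_atTop_ciInf hanti hbdd
  suffices hc : ⨅ t, M t = 0 by rwa [hc] at hlim
  by_contra hne
  set c := ⨅ t, M t
  have hc : 0 < φ c := hφ0 ▸ hφ (lt_of_le_of_ne (le_ciInf hM) (Ne.symm hne))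
  -- `c ≤ M t` for every `t`, so each step removes at least `η t * φ c`
  have hsum : ∀ T, M T ≤ M 0 - φ c * ∑ t ∈ Finset.range T, η t := by
    intro T
    induction T with
    | zero => simp
    | succ T ih =>
      have := mul_le_mul_of_nonneg_left (hφ.monotone (ciInf_le hbdd T)) (hη T)
      rw [Finset.sum_range_succ]
      nlinarith [hstep T]
  have hS := (not_summable_iff_tendsto_nat_atTop_of_nonneg hη).1 hdiv
  obtain ⟨T, hT⟩ := ((hS.const_mul_atTop hc).eventually_gt_atTop (M 0)).exists
  linarith [hsum T, hM T]

section Mixture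

variable {η : ℝ}

lemma exp_neg_sub_eq_mix {a a' b c : ℝ}
    (hmix : exp (-a') = (1 - η) * exp (-a) + η * exp (-b)) :
    exp (-(a' - c)) = (1 - η) * exp (-(a - c)) + η * exp (-(b - c)) := by
  have hshift : ∀ z, exp (-(z - c)) = exp (-z) * exp c := fun z => by
    rw [← exp_add]; ring_nf
  rw [hshift, hshift, hshift, hmix]
  ring

lemma abs_le_of_exp_neg_eq_mix (hη0 : 0 ≤ η) (hη1 : η ≤ 1) {a a' b K : ℝ}
    (hmix : exp (-a') = (1 - η) * exp (-a) + η * exp (-b)) (ha : |a| ≤ K) (hb : |b| ≤ K) :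
    |a'| ≤ K := by
  rw [abs_le] at *
  have ha_lo := exp_le_exp.2 (neg_le_neg ha.2)
  have ha_hi := exp_le_exp.2 (neg_le.1 ha.1)
  have hb_lo := exp_le_exp.2 (neg_le_neg hb.2)
  have hb_hi := exp_le_exp.2 (neg_le.1 hb.1)
  have hlo : exp (-K) ≤ exp (-a') := by rw [hmix]; nlinarith
  have hhi : exp (-a') ≤ exp K := by rw [hmix]; nlinarith
  constructor <;> linarith [exp_le_exp.1 hlo, exp_le_exp.1 hhi]

lemma sub_le_of_exp_neg_eq_mix {X : Type*} {u u' w : X → ℝ} {ε θ M : ℝ}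
    (hη0 : 0 ≤ η) (hη1 : η ≤ 1) (hθ : 0 ≤ θ) (hM : 0 ≤ M)
    (hmix : ∀ x, exp (-u' x) = (1 - η) * exp (-u x) + η * exp (-w x))
    (hu : ∀ x x', u x - u x' ≤ M) (hw : ∀ x x', exp (w x - w x') ≤ θ + (1 - θ) * exp M)
    (hε : ∀ x, ε * exp (-u' x) ≤ exp (-w x)) (x x' : X) :
    u' x - u' x' ≤ M - η * (ε * θ * (1 - exp (-M))) := by
  have hratio : ∀ {v : X → ℝ} {q : ℝ}, exp (v x - v x') ≤ q → exp (-v x') ≤ q * exp (-v x) :=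
    fun {v q} h => by
      calc exp (-v x') = exp (v x - v x') * exp (-v x) := by rw [← exp_add]; ring_nf
        _ ≤ q * exp (-v x) := by gcongr
  have hua := hratio (exp_le_exp.2 (hu x x'))
  have hwb := hratio (hw x x')
  have hεx : ε * ((1 - η) * exp (-u x) + η * exp (-w x)) ≤ exp (-w x) := hmix x ▸ hε x
  have heM : 1 ≤ exp M := one_le_exp hM
  -- the contraction of `w` saves `η θ (exp M - 1) exp (-w x)` over the trivial bound
  -- `exp M * exp (-u' x)`, and by `hε` this saving is a fixed fraction of `exp (-u' x)`
  have hmix' : exp (-u' x') ≤ (exp M - η * ε * θ * (exp M - 1)) * exp (-u' x) := by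
    rw [hmix x', hmix x]
    linarith [mul_le_mul_of_nonneg_left hua (sub_nonneg.2 hη1),
      mul_le_mul_of_nonneg_left hwb hη0,
      mul_le_mul_of_nonneg_left hεx (mul_nonneg (mul_nonneg hη0 hθ) (sub_nonneg.2 heM))]
  set s := η * (ε * θ * (1 - exp (-M))) with hs
  have hexp : exp (u' x - u' x') ≤ exp M * (1 - s) := by
    have hfactor : exp M - η * ε * θ * (exp M - 1) = exp M * (1 - s) := by
      rw [hs, exp_neg]; field_simp
    rw [← hfactor]
    refine le_of_mul_le_mul_right ?_ (exp_pos (-u' x))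
    rwa [← exp_add, show u' x - u' x' + -u' x = -u' x' by ring]
  rw [← exp_le_exp]
  calc exp (u' x - u' x') ≤ exp M * (1 - s) := hexp
    _ ≤ exp M * exp (-s) := by gcongr; linarith [add_one_le_exp (-s)]
    _ = exp (M - s) := by rw [← exp_add, sub_eq_add_neg]

lemma continuous_of_exp_neg_eq_mix {X : Type*} [TopologicalSpace X] {u u' w : X → ℝ}
    (hu : Continuous u) (hw : Continuous w)
    (hmix : ∀ x, exp (-u' x) = (1 - η) * exp (-u x) + η * exp (-w x)) : Continuous u' := by
  have hu' : u' = fun x => -log ((1 - η) * exp (-u x) + η * exp (-w x)) := by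
    funext x
    rw [← hmix, log_exp, neg_neg]
  rw [hu']
  exact (Continuous.log (by fun_prop) fun x => hmix x ▸ (exp_pos _).ne').neg

end Mixture

/-- `hFG` says that `F / ∫ F` dominates `θ G / ∫ G`: split `(∫ G) F = θ (∫ F) G + (rest ≥ 0)`
and bound `g` by `m r` on the rest. -/
lemma integral_mul_mul_integral_le {X : Type*} [MeasurableSpace X] {μ : Measure X}
    {F G g : X → ℝ} {θ m r : ℝ}
    (hF : Integrable F μ) (hG : Integrable G μ)
    (hgF : Integrable (fun y => g y * F y) μ) (hgG : Integrable (fun y => g y * G y) μ)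
    (hF0 : ∀ y, 0 ≤ F y) (hG0 : ∀ y, 0 ≤ G y) (hθ : θ ≤ 1) (hr : 0 ≤ r)
    (hFG : ∀ y, θ * (∫ z, F z ∂μ) * G y ≤ (∫ z, G z ∂μ) * F y)
    (hm : ∀ y, m ≤ g y) (hgr : ∀ y, g y ≤ m * r) :
    (∫ y, g y * F y ∂μ) * ∫ y, G y ∂μ
      ≤ (θ + (1 - θ) * r) * (∫ y, F y ∂μ) * ∫ y, g y * G y ∂μ := by
  set A := ∫ y, F y ∂μ
  set B := ∫ y, G y ∂μ
  have hrest : ∫ y, g y * (B * F y - θ * A * G y) ∂μ ≤ ∫ y, m * r * (B * F y - θ * A * G y) ∂μ :=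
    integral_mono (((hgF.const_mul B).sub (hgG.const_mul (θ * A))).congr
        (ae_of_all _ fun y => by simp only [Pi.sub_apply]; ring))
      (((hF.const_mul B).sub (hG.const_mul (θ * A))).const_mul (m * r))
      fun y => mul_le_mul_of_nonneg_right (hgr y) (sub_nonneg.2 (hFG y))
  have hlhs : ∫ y, g y * (B * F y - θ * A * G y) ∂μ
      = B * ∫ y, g y * F y ∂μ - θ * A * ∫ y, g y * G y ∂μ := by
    simp only [mul_sub, mul_left_comm (g _)]
    rw [integral_sub (hgF.const_mul B) (hgG.const_mul _), integral_const_mul, integral_const_mul]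
  have hrhs : ∫ y, m * r * (B * F y - θ * A * G y) ∂μ = m * r * (B * A - θ * A * B) := by
    rw [integral_const_mul, integral_sub (hF.const_mul B) (hG.const_mul _), integral_const_mul,
      integral_const_mul]
  have hmin : m * B ≤ ∫ y, g y * G y ∂μ := by
    rw [← integral_const_mul]
    exact integral_mono (hG.const_mul m) hgG fun y => mul_le_mul_of_nonneg_right (hm y) (hG0 y)
  have hA : 0 ≤ A := integral_nonneg hF0
  have := mul_le_mul_of_nonneg_left hmin (mul_nonneg (mul_nonneg hr (sub_nonneg.2 hθ)) hA)
  linarith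

section SoftTransform

variable {X : Type*} [TopologicalSpace X] {C : X × X → ℝ} {h₁ h₂ : X → ℝ}

lemma continuous_exp_sub_apply (hC : Continuous C) (hh : Continuous h₁) (x : X) :
    Continuous fun y => exp (h₁ y - C (x, y)) := by
  fun_prop

variable [CompactSpace X] [MeasurableSpace X] [OpensMeasurableSpace X] {μ : Measure X}

lemma Continuous.integrable_of_compactSpace [IsFiniteMeasure μ] {F : X → ℝ} (hF : Continuous F) :
    Integrable F μ :=
  hF.integrable_of_hasCompactSupport (HasCompactSupport.of_compactSpace F)

variable [IsProbabilityMeasure μ]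

lemma integral_exp_sub_apply_pos (hC : Continuous C) (hh : Continuous h₁) (x : X) :
    0 < ∫ y, exp (h₁ y - C (x, y)) ∂μ :=
  integral_exp_pos (continuous_exp_sub_apply hC hh x).integrable_of_compactSpace

lemma softT_sub_softT_le (hC : Continuous C) (hh₁ : Continuous h₁) (hh₂ : Continuous h₂)
    {M : ℝ} (hM : ∀ y, h₂ y - h₁ y ≤ M) (x : X) :
    softT C μ h₁ x - softT C μ h₂ x ≤ M := by
  have hpos := integral_exp_sub_apply_pos (μ := μ) hC hh₁ x
  have hle : ∫ y, exp (h₂ y - C (x, y)) ∂μ ≤ exp M * ∫ y, exp (h₁ y - C (x, y)) ∂μ := by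
    rw [← integral_const_mul]
    refine integral_mono (continuous_exp_sub_apply hC hh₂ x).integrable_of_compactSpace
      ((continuous_exp_sub_apply hC hh₁ x).integrable_of_compactSpace.const_mul _) fun y => ?_
    rw [← exp_add]
    exact exp_le_exp.2 (by linarith [hM y])
  have hlog := log_le_log (integral_exp_sub_apply_pos hC hh₂ x) hle
  rw [log_mul (exp_ne_zero _) hpos.ne', log_exp] at hlog
  simp only [softT]
  linarith

lemma abs_softT_sub_softT_le (hC : Continuous C) (hh₁ : Continuous h₁) (hh₂ : Continuous h₂)
    {K : ℝ} (hK : ∀ y, |h₁ y - h₂ y| ≤ K) (x : X) :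
    |softT C μ h₁ x - softT C μ h₂ x| ≤ K := by
  rw [abs_le]
  constructor
  · linarith [softT_sub_softT_le (μ := μ) hC hh₂ hh₁ (fun y => (abs_le.1 (hK y)).2) x]
  · exact softT_sub_softT_le hC hh₁ hh₂ (fun y => by linarith [(abs_le.1 (hK y)).1]) x

lemma continuous_softT [FirstCountableTopology X] [LocallyCompactSpace X] (hC : Continuous C)
    (hh : Continuous h₁) : Continuous (softT C μ h₁) := by
  have hint : Continuous fun x => ∫ y, exp (h₁ y - C (x, y)) ∂μ := by
    simpa only [Measure.restrict_univ] using
      continuous_parametric_integral_of_continuous (μ := μ)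
        (f := fun x y => exp (h₁ y - C (x, y))) (by fun_prop) isCompact_univ
  exact (hint.log fun x => (integral_exp_sub_apply_pos (μ := μ) hC hh x).ne').neg

/-- The Gibbs density `exp (h - C (x, ·)) / ∫ exp (h - C (x, ·))` at `x` is at least `exp (-2R)`
times the one at `x'`. -/
lemma exp_neg_two_mul_integral_exp_sub_mul_le (hC : Continuous C) {R : ℝ}
    (hR : ∀ x x' y, C (x, y) - C (x', y) ≤ R) (hh : Continuous h₁) (x x' y : X) :
    exp (-(2 * R)) * (∫ z, exp (h₁ z - C (x, z)) ∂μ) * exp (h₁ y - C (x', y))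
      ≤ (∫ z, exp (h₁ z - C (x', z)) ∂μ) * exp (h₁ y - C (x, y)) := by
  have hkernel : ∀ z z' y, exp (h₁ y - C (z, y)) ≤ exp R * exp (h₁ y - C (z', y)) :=
    fun z z' y => by rw [← exp_add]; exact exp_le_exp.2 (by linarith [hR z' z y])
  have hint : ∫ z, exp (h₁ z - C (x, z)) ∂μ ≤ exp R * ∫ z, exp (h₁ z - C (x', z)) ∂μ := by
    rw [← integral_const_mul]
    exact integral_mono (continuous_exp_sub_apply hC hh x).integrable_of_compactSpace
      ((continuous_exp_sub_apply hC hh x').integrable_of_compactSpace.const_mul _)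
      fun z => hkernel x x' z
  calc exp (-(2 * R)) * (∫ z, exp (h₁ z - C (x, z)) ∂μ) * exp (h₁ y - C (x', y))
      ≤ exp (-(2 * R)) * (exp R * ∫ z, exp (h₁ z - C (x', z)) ∂μ)
          * (exp R * exp (h₁ y - C (x, y))) := by
        gcongr
        exact hkernel x' x y
    _ = (∫ z, exp (h₁ z - C (x', z)) ∂μ) * exp (h₁ y - C (x, y)) := by
        rw [show exp (-(2 * R)) = (exp R)⁻¹ * (exp R)⁻¹ by rw [← exp_neg, ← exp_add]; ring_nf]
        field_simp

lemma exp_softT_sub_sub_le (hC : Continuous C) {R D : ℝ}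
    (hR : ∀ x x' y, C (x, y) - C (x', y) ≤ R) (hh₁ : Continuous h₁) (hh₂ : Continuous h₂)
    (hD : ∀ y y', (h₂ y - h₁ y) - (h₂ y' - h₁ y') ≤ D) (x x' : X) :
    exp ((softT C μ h₁ x - softT C μ h₂ x) - (softT C μ h₁ x' - softT C μ h₂ x'))
      ≤ exp (-(2 * R)) + (1 - exp (-(2 * R))) * exp D := by
  have : Nonempty X := ⟨x⟩
  obtain ⟨y₀, -, hy₀⟩ := isCompact_univ.exists_isMinOn Set.univ_nonempty
    (hh₂.sub hh₁).continuousOn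
  set g := fun y => exp (h₂ y - h₁ y)
  have hgexp : ∀ z y, exp (h₂ y - C (z, y)) = g y * exp (h₁ y - C (z, y)) := fun z y => by
    rw [← exp_add]; ring_nf
  have hg : Continuous g := by fun_prop
  have hmain := integral_mul_mul_integral_le
    (continuous_exp_sub_apply hC hh₁ x).integrable_of_compactSpace
    (continuous_exp_sub_apply hC hh₁ x').integrable_of_compactSpace
    (hg.mul (continuous_exp_sub_apply hC hh₁ x)).integrable_of_compactSpace
    (hg.mul (continuous_exp_sub_apply hC hh₁ x')).integrable_of_compactSpace
    (fun y => (exp_pos _).le) (fun y => (exp_pos _).le)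
    (exp_le_one_iff.2 (by linarith [hR x x x])) (exp_pos D).le
    (exp_neg_two_mul_integral_exp_sub_mul_le (μ := μ) hC hR hh₁ x x')
    (m := g y₀) (fun y => exp_le_exp.2 (hy₀ (Set.mem_univ y)))
    (fun y => by rw [← exp_add]; exact exp_le_exp.2 (by linarith [hD y y₀]))
  have hA := integral_exp_sub_apply_pos (μ := μ) hC hh₁ x
  have hB := integral_exp_sub_apply_pos (μ := μ) hC hh₁ x'
  have hI := integral_exp_sub_apply_pos (μ := μ) hC hh₂ x
  have hJ := integral_exp_sub_apply_pos (μ := μ) hC hh₂ x'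
  simp only [hgexp] at hI hJ
  simp only [softT, hgexp]
  generalize ∫ y, exp (h₁ y - C (x, y)) ∂μ = A at hA hmain ⊢
  generalize ∫ y, exp (h₁ y - C (x', y)) ∂μ = B at hB hmain ⊢
  generalize ∫ y, g y * exp (h₁ y - C (x, y)) ∂μ = I at hI hmain ⊢
  generalize ∫ y, g y * exp (h₁ y - C (x', y)) ∂μ = J at hJ hmain ⊢
  rw [show -log A - -log I - (-log B - -log J) = log (I * B) - log (A * J) by
      rw [log_mul hI.ne' hB.ne', log_mul hA.ne' hJ.ne']; ring,
    exp_sub, exp_log (mul_pos hI hB), exp_log (mul_pos hA hJ), div_le_iff₀ (mul_pos hA hJ)]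
  linarith

end SoftTransform

lemma exists_forall_sub_le_of_continuous {X Y : Type*} [TopologicalSpace X] [TopologicalSpace Y]
    [CompactSpace X] [CompactSpace Y] {C : X × Y → ℝ} (hC : Continuous C) :
    ∃ R, ∀ x x' y, C (x, y) - C (x', y) ≤ R := by
  obtain ⟨a, ha⟩ := (isCompact_range hC).bddAbove
  obtain ⟨b, hb⟩ := (isCompact_range hC).bddBelow
  exact ⟨a - b, fun x x' y => sub_le_sub (ha ⟨(x, y), rfl⟩) (hb ⟨(x', y), rfl⟩)⟩

section OnlineStep

variable {X : Type*} [MeasurableSpace X] {C : X × X → ℝ} {μ : Measure X} {η : ℝ}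
  {h hs f f' fs : X → ℝ}

def IsOnlineSinkhornStep (C : X × X → ℝ) (μ : Measure X) (η : ℝ) (h f f' : X → ℝ) : Prop :=
  ∀ x, exp (-f' x) = (1 - η) * exp (-f x) + η * exp (-softT C μ h x)

lemma IsOnlineSinkhornStep.exp_neg_sub_eq (hstep : IsOnlineSinkhornStep C μ η h f f')
    (hfix : fs = softT C μ hs) (x : X) :
    exp (-(f' x - fs x)) = (1 - η) * exp (-(f x - fs x))
      + η * exp (-(softT C μ h x - softT C μ hs x)) := by
  subst hfix
  exact exp_neg_sub_eq_mix (hstep x)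

variable [TopologicalSpace X] [CompactSpace X] [OpensMeasurableSpace X] [IsProbabilityMeasure μ]

lemma IsOnlineSinkhornStep.abs_sub_le (hstep : IsOnlineSinkhornStep C μ η h f f')
    (hC : Continuous C) (hh : Continuous h) (hhs : Continuous hs) (hfix : fs = softT C μ hs)
    (hη0 : 0 ≤ η) (hη1 : η ≤ 1) {K : ℝ} (hf : ∀ x, |f x - fs x| ≤ K)
    (hhK : ∀ x, |h x - hs x| ≤ K) (x : X) :
    |f' x - fs x| ≤ K :=
  abs_le_of_exp_neg_eq_mix hη0 hη1 (hstep.exp_neg_sub_eq hfix x) (hf x)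
    (abs_softT_sub_softT_le hC hh hhs hhK x)

lemma IsOnlineSinkhornStep.varNorm_sub_le [Nonempty X] (hstep : IsOnlineSinkhornStep C μ η h f f')
    (hC : Continuous C) {R K M : ℝ} (hR : ∀ x x' y, C (x, y) - C (x', y) ≤ R)
    (hh : Continuous h) (hhs : Continuous hs) (hf : Continuous f) (hfs : Continuous fs)
    (hfix : fs = softT C μ hs) (hη0 : 0 ≤ η) (hη1 : η ≤ 1)
    (hhK : ∀ x, |h x - hs x| ≤ K) (hf'K : ∀ x, |f' x - fs x| ≤ K)
    (hfM : varNorm (fun x => f x - fs x) ≤ M) (hhM : varNorm (fun x => h x - hs x) ≤ M) :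
    varNorm (fun x => f' x - fs x)
      ≤ M - η * (exp (-(2 * K)) * exp (-(2 * R)) * (1 - exp (-M))) := by
  have hu := isCompact_range (hf.sub hfs)
  have hv := isCompact_range (hh.sub hhs)
  have hM : 0 ≤ M := (varNorm_nonneg hu.bddAbove hu.bddBelow).trans hfM
  refine varNorm_le_of_forall_sub_le fun x x' =>
    sub_le_of_exp_neg_eq_mix (w := fun x => softT C μ h x - softT C μ hs x) hη0 hη1
      (exp_pos _).le hM (hstep.exp_neg_sub_eq hfix)
      (fun x x' => (sub_le_varNorm hu.bddAbove hu.bddBelow x x').trans hfM) (fun x x' => ?_)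
      (fun x => ?_) x x'
  · have := exp_softT_sub_sub_le (μ := μ) hC hR hhs hh
      (fun y y' => (sub_le_varNorm hv.bddAbove hv.bddBelow y y').trans hhM) x' x
    convert this using 2
    ring
  · have hw := abs_le.1 (abs_softT_sub_softT_le (μ := μ) hC hh hhs hhK x)
    have hu' := abs_le.1 (hf'K x)
    rw [← exp_add]
    exact exp_le_exp.2 (by linarith)

end OnlineStep

theorem noise_free_online_sinkhorn_converges_general
    {X : Type*} [MetricSpace X] [CompactSpace X] [Nonempty X]
    [MeasurableSpace X] [BorelSpace X]
    (L : ℝ) (C : X × X → ℝ) (hC : LipschitzWith L.toNNReal C)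
    (α β : Measure X) [IsProbabilityMeasure α] [IsProbabilityMeasure β]
    (fs gs : X → ℝ) (hfs : Continuous fs) (hgs : Continuous gs)
    (hfix1 : fs = softT C β gs) (hfix2 : gs = softT C α fs)
    (η : ℕ → ℝ) (hη0 : ∀ t, 0 ≤ η t) (hη1 : ∀ t, η t ≤ 1)
    (hdiv : ¬ Summable η)
    (f g : ℕ → X → ℝ) (hf0 : Continuous (f 0)) (hg0 : Continuous (g 0))
    (hfrec : ∀ t x, Real.exp (-(f (t + 1) x)) =
      (1 - η t) * Real.exp (-(f t x)) + η t * Real.exp (-(softT C β (g t) x)))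
    (hgrec : ∀ t x, Real.exp (-(g (t + 1) x)) =
      (1 - η t) * Real.exp (-(g t x)) + η t * Real.exp (-(softT C α (f t) x))) :
    Tendsto (fun t =>
        varNorm (fun x => f t x - fs x) + varNorm (fun x => g t x - gs x))
      atTop (nhds 0) := by
  have hCc : Continuous C := hC.continuous
  obtain ⟨R, hR⟩ := exists_forall_sub_le_of_continuous hCc
  have hcont : ∀ t, Continuous (f t) ∧ Continuous (g t) := fun t => by
    induction t with
    | zero => exact ⟨hf0, hg0⟩
    | succ t ih =>
      exact ⟨continuous_of_exp_neg_eq_mix ih.1 (continuous_softT hCc ih.2) (hfrec t),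
        continuous_of_exp_neg_eq_mix ih.2 (continuous_softT hCc ih.1) (hgrec t)⟩
  obtain ⟨K, hK0⟩ := (isCompact_range (by fun_prop :
    Continuous fun x => max |f 0 x - fs x| |g 0 x - gs x|)).bddAbove
  have hK : ∀ t, (∀ x, |f t x - fs x| ≤ K) ∧ ∀ x, |g t x - gs x| ≤ K := fun t => by
    induction t with
    | zero => exact ⟨fun x => (le_max_left _ _).trans (hK0 ⟨x, rfl⟩),
        fun x => (le_max_right _ _).trans (hK0 ⟨x, rfl⟩)⟩
    | succ t ih =>
      exact ⟨IsOnlineSinkhornStep.abs_sub_le (hfrec t) hCc (hcont t).2 hgs hfix1 (hη0 t)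
          (hη1 t) ih.1 ih.2,
        IsOnlineSinkhornStep.abs_sub_le (hgrec t) hCc (hcont t).1 hfs hfix2 (hη0 t)
          (hη1 t) ih.2 ih.1⟩
  have hvar0 : ∀ {w : X → ℝ}, Continuous w → 0 ≤ varNorm w := fun hw =>
    varNorm_nonneg (isCompact_range hw).bddAbove (isCompact_range hw).bddBelow
  set M := fun t => max (varNorm fun x => f t x - fs x) (varNorm fun x => g t x - gs x)
  have hM : Tendsto M atTop (𝓝 0) := by
    refine tendsto_zero_of_succ_le_sub_mul (fun t => (hvar0 ((hcont t).1.sub hfs)).trans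
      (le_max_left _ _)) hη0 hdiv (φ := fun m => exp (-(2 * K)) * exp (-(2 * R)) * (1 - exp (-m)))
      (fun m m' hmm' => mul_lt_mul_of_pos_left (by simpa using hmm') (by positivity)) (by simp)
      fun t => max_le ?_ ?_
    · exact IsOnlineSinkhornStep.varNorm_sub_le (hfrec t) hCc hR (hcont t).2 hgs (hcont t).1 hfs
        hfix1 (hη0 t) (hη1 t) (hK t).2 (hK (t + 1)).1 (le_max_left _ _) (le_max_right _ _)
    · exact IsOnlineSinkhornStep.varNorm_sub_le (hgrec t) hCc hR (hcont t).1 hfs (hcont t).2 hgs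
        hfix2 (hη0 t) (hη1 t) (hK t).1 (hK (t + 1)).2 (le_max_right _ _) (le_max_left _ _)
  refine squeeze_zero
    (fun t => add_nonneg (hvar0 ((hcont t).1.sub hfs)) (hvar0 ((hcont t).2.sub hgs)))
    (fun t => add_le_add (le_max_left _ _) (le_max_right _ _)) (g := fun t => M t + M t) ?_
  simpa using hM.add hM

/-- Noise-free online Sinkhorn converges: with step sizes `η_t ∈ [0,1]`, `Σ η_t = ∞`,
the iterates defined by `exp(−f_{t+1}) = (1−η_t) exp(−f_t) + η_t exp(−T_β g_t)` and
`exp(−g_{t+1}) = (1−η_t) exp(−g_t) + η_t exp(−T_α f_t)` satisfy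
`‖f_t − f*‖_var + ‖g_t − g*‖_var → 0`. -/
theorem noise_free_online_sinkhorn_converges
    {X : Type*} [MetricSpace X] [CompactSpace X] [Nonempty X]
    [MeasurableSpace X] [BorelSpace X]
    (L : ℝ) (hL : 0 < L) (C : X × X → ℝ) (hC : LipschitzWith L.toNNReal C)
    (α β : Measure X) [IsProbabilityMeasure α] [IsProbabilityMeasure β]
    (fs gs : X → ℝ) (hfs : Continuous fs) (hgs : Continuous gs)
    (hfix1 : fs = softT C β gs) (hfix2 : gs = softT C α fs)
    (η : ℕ → ℝ) (hη0 : ∀ t, 0 ≤ η t) (hη1 : ∀ t, η t ≤ 1)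
    (hdiv : ¬ Summable η)
    (f g : ℕ → X → ℝ) (hf0 : Continuous (f 0)) (hg0 : Continuous (g 0))
    (hfrec : ∀ t x, Real.exp (-(f (t + 1) x)) =
      (1 - η t) * Real.exp (-(f t x)) + η t * Real.exp (-(softT C β (g t) x)))
    (hgrec : ∀ t x, Real.exp (-(g (t + 1) x)) =
      (1 - η t) * Real.exp (-(g t x)) + η t * Real.exp (-(softT C α (f t) x))) :
    Tendsto (fun t =>
        varNorm (fun x => f t x - fs x) + varNorm (fun x => g t x - gs x))
      atTop (nhds 0) :=
  noise_free_online_sinkhorn_converges_general L C hC α β fs gs hfs hgs hfix1 hfix2 η hη0 hη1 hdiv f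
    g hf0 hg0 hfrec hgrec
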